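/- Let k ≥ 2, 1 ≤ r < k-1, p ≥ 1, with 2p+1 < diam(K(2k+r,k)). Let A, B be k-subsets of [2k+r] with |A ∩ B| ≤ rp - r. Then dist in K_{=2p+1}(2k+r,k) between A and B equals 2 if |A ∩ B| ≥ k - 2rp - r, and equals 3 if |A ∩ B| < k - 2rp - r. -/

import Mathlib

/-- The Kneser graph: vertices are the `k`-subsets of `[n]`, adjacency is disjointness. -/
def kneserGraph (n k : ℕ) : SimpleGraph {A : Finset (Fin n) // A.card = k} where
  Adj A B := A ≠ B ∧ Disjoint A.1 B.1
  symm := ⟨fun A B h => ⟨h.1.symm, h.2.symm⟩⟩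
  loopless := ⟨fun A h => h.1 rfl⟩

/-- The exact distance-`d` graph of a graph `G`. -/
def exactDistanceGraph {V : Type*} (G : SimpleGraph V) (d : ℕ) : SimpleGraph V where
  Adj A B := A ≠ B ∧ G.dist A B = d
  symm := ⟨fun A B h => ⟨h.1.symm, by rw [SimpleGraph.dist_comm]; exact h.2⟩⟩
  loopless := ⟨fun A h => h.1 rfl⟩
/-!
In `K(2k+r, k)` every neighbour of a `k`-set lies in its complement, which has only `k + r`
points. Hence a walk of length `2j` from `X` to `Y` forces `k ≤ |X ∩ Y| + jr` and one of length
`2j+1` forces `|X ∩ Y| ≤ jr`; conversely, choosing each intermediate set greedily realises these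
bounds. So `2rp < k` (which the diameter hypothesis forces) makes sets meeting in exactly `rp`
points adjacent in `K_{=2p+1}`, adjacent sets there meet in at most `rp` points, and sets meeting
in at most `rp - r` points are at Kneser distance at most `2p - 1`, hence not adjacent.

A common neighbour of `A` and `B` must place at least `k - 2rp` points outside `A ∪ B`, a set of
`r + |A ∩ B|` points; when this is possible one with `|A ∩ C| = |B ∩ C| = rp` exists, and
otherwise the path `A, C, D, B` with `|C ∩ B| = k - rp` and all other consecutive intersections
of size `rp` gives distance `3`.
-/

open Finset SimpleGraph

namespace SimpleGraph

variable {V : Type*} {G : SimpleGraph V} {u v w : V}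

lemma dist_eq_two_of_mem_commonNeighbors (hne : u ≠ v) (hnadj : ¬G.Adj u v)
    (hw : w ∈ G.commonNeighbors u v) : G.dist u v = 2 := by
  simp [dist, edist_eq_two_iff.mpr ⟨hne, hnadj, w, hw⟩]

lemma dist_eq_three_of_commonNeighbors_eq_empty (hne : u ≠ v) (hnadj : ¬G.Adj u v)
    (hc : G.commonNeighbors u v = ∅) (p : G.Walk u v) (hp : p.length = 3) : G.dist u v = 3 := by
  have hlt : 2 < G.edist u v := two_lt_edist_iff.mpr ⟨hne, hnadj, hc⟩
  have hle : G.edist u v ≤ 3 := by simpa [hp] using p.edist_le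
  simp [dist, le_antisymm hle (Order.add_one_le_of_lt hlt)]

end SimpleGraph

namespace Finset

variable {α : Type*} [DecidableEq α]

lemma card_inter_add_card_inter_le_of_disjoint {X Z : Finset α} (Y : Finset α)
    (h : Disjoint X Z) : #(X ∩ Y) + #(Z ∩ Y) ≤ #Y := by
  rw [← card_union_of_disjoint (h.mono inter_subset_left inter_subset_left),
    ← union_inter_distrib_right]
  exact card_le_card inter_subset_right

variable [Fintype α]

lemma card_le_card_inter_add_card_inter_add_card_compl (X Y Z : Finset α) :
    #Y ≤ #(X ∩ Y) + #(Z ∩ Y) + #(X ∪ Z)ᶜ :=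
  calc #Y ≤ #(X ∩ Y ∪ Z ∩ Y ∪ (X ∪ Z)ᶜ) :=
        card_le_card fun a ha => by simp only [mem_union, mem_inter, mem_compl]; tauto
    _ ≤ #(X ∩ Y ∪ Z ∩ Y) + #(X ∪ Z)ᶜ := card_union_le _ _
    _ ≤ #(X ∩ Y) + #(Z ∩ Y) + #(X ∪ Z)ᶜ := by gcongr; exact card_union_le _ _

lemma exists_card_inter_eq_of_le {S T : Finset α} {a b c : ℕ} (ha : a ≤ #(S \ T))
    (hb : b ≤ #(T \ S)) (hc : c ≤ #(S ∪ T)ᶜ) :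
    ∃ C : Finset α, #C = a + b + c ∧ #(S ∩ C) = a ∧ #(T ∩ C) = b := by
  obtain ⟨P, hP, rfl⟩ := exists_subset_card_eq ha
  obtain ⟨Q, hQ, rfl⟩ := exists_subset_card_eq hb
  obtain ⟨R, hR, rfl⟩ := exists_subset_card_eq hc
  rw [subset_iff] at hP hQ hR
  simp only [mem_sdiff, mem_compl, mem_union] at hP hQ hR
  refine ⟨P ∪ Q ∪ R, ?_, congrArg card ?_, congrArg card ?_⟩
  · rw [card_union_of_disjoint (by grind [disjoint_left]),
      card_union_of_disjoint (by grind [disjoint_left])]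
  · grind
  · grind

end Finset

namespace kneserGraph

variable {k r p : ℕ} {X Y : {A : Finset (Fin (2 * k + r)) // #A = k}}

variable (X Y) in
lemma card_inter_le : #(X.1 ∩ Y.1) ≤ k :=
  (card_le_card inter_subset_left).trans_eq X.2

variable (X Y) in
lemma card_compl_union : #(X.1 ∪ Y.1)ᶜ = r + #(X.1 ∩ Y.1) := by
  have := card_union_add_card_inter X.1 Y.1
  rw [card_compl, Fintype.card_fin, X.2, Y.2] at *
  omega

lemma ne_of_card_inter_lt (h : #(X.1 ∩ Y.1) < k) : X ≠ Y := by
  rintro rfl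
  rw [inter_self, X.2] at h
  exact lt_irrefl k h

variable (X Y) in
lemma exists_card_inter_eq {a b : ℕ} (ha : a + #(X.1 ∩ Y.1) ≤ k)
    (hb : b + #(X.1 ∩ Y.1) ≤ k) (hab : a + b ≤ k) (hk : k ≤ a + b + r + #(X.1 ∩ Y.1)) :
    ∃ C : {A : Finset (Fin (2 * k + r)) // #A = k},
      #(X.1 ∩ C.1) = a ∧ #(Y.1 ∩ C.1) = b := by
  have hX := card_sdiff_add_card_inter X.1 Y.1
  have hY := card_sdiff_add_card_inter Y.1 X.1
  rw [X.2] at hX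
  rw [inter_comm Y.1, Y.2] at hY
  obtain ⟨C, hC, hXC, hYC⟩ :=
    exists_card_inter_eq_of_le (S := X.1) (T := Y.1) (a := a) (b := b) (c := k - a - b)
      (by omega) (by omega) (by rw [card_compl_union]; omega)
  exact ⟨⟨C, by omega⟩, hXC, hYC⟩

lemma adj_of_disjoint (hk : 0 < k) (h : Disjoint X.1 Y.1) : (kneserGraph (2 * k + r) k).Adj X Y :=
  ⟨ne_of_card_inter_lt (by rwa [disjoint_iff_inter_eq_empty.mp h, card_empty]), h⟩

variable (X Y) in
lemma exists_adj_card_inter_eq (hk : 0 < k) {b : ℕ} (hb : b + #(X.1 ∩ Y.1) ≤ k)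
    (hb' : k ≤ b + r + #(X.1 ∩ Y.1)) :
    ∃ Z, (kneserGraph (2 * k + r) k).Adj X Z ∧ #(Z.1 ∩ Y.1) = b := by
  obtain ⟨Z, hXZ, hYZ⟩ := exists_card_inter_eq X Y (a := 0)
    (by have := card_inter_le X Y; omega) hb (by omega) (by omega)
  refine ⟨Z, adj_of_disjoint hk (disjoint_iff_inter_eq_empty.mpr (card_eq_zero.mp hXZ)), ?_⟩
  rwa [inter_comm]

lemma exists_walk_odd_of_even (hk : 0 < k) {m : ℕ}
    (heven : ∀ Z, k ≤ #(Z.1 ∩ Y.1) + m * r →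
      ∃ w : (kneserGraph (2 * k + r) k).Walk Z Y, w.length ≤ 2 * m)
    (h : #(X.1 ∩ Y.1) ≤ m * r) :
    ∃ w : (kneserGraph (2 * k + r) k).Walk X Y, w.length ≤ 2 * m + 1 := by
  have := card_inter_le X Y
  obtain ⟨Z, hXZ, hZY⟩ := exists_adj_card_inter_eq X Y (b := k - #(X.1 ∩ Y.1)) hk
    (by omega) (by omega)
  obtain ⟨w, hw⟩ := heven Z (by omega)
  exact ⟨.cons hXZ w, by rw [Walk.length_cons]; omega⟩

lemma exists_walk_of_le_card_inter_add (hk : 0 < k) (m : ℕ) (h : k ≤ #(X.1 ∩ Y.1) + m * r) :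
    ∃ w : (kneserGraph (2 * k + r) k).Walk X Y, w.length ≤ 2 * m := by
  induction m generalizing X with
  | zero =>
    rw [zero_mul, add_zero] at h
    have hX : X.1 ∩ Y.1 = X.1 := eq_of_subset_of_card_le inter_subset_left (X.2.trans_le h)
    have hY : X.1 ∩ Y.1 = Y.1 := eq_of_subset_of_card_le inter_subset_right (Y.2.trans_le h)
    obtain rfl : X = Y := Subtype.ext (hX.symm.trans hY)
    exact ⟨.nil, le_rfl⟩
  | succ m ih =>
    rw [add_mul, one_mul] at h
    have := card_inter_le X Y
    obtain ⟨Z, hXZ, hZY⟩ := exists_adj_card_inter_eq X Y (b := k - r - #(X.1 ∩ Y.1)) hk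
      (by omega) (by omega)
    obtain ⟨w, hw⟩ := exists_walk_odd_of_even hk (fun _ => ih) (X := Z) (by omega)
    exact ⟨.cons hXZ w, by rw [Walk.length_cons]; omega⟩

lemma exists_walk_of_card_inter_le (hk : 0 < k) (m : ℕ) (h : #(X.1 ∩ Y.1) ≤ m * r) :
    ∃ w : (kneserGraph (2 * k + r) k).Walk X Y, w.length ≤ 2 * m + 1 :=
  exists_walk_odd_of_even hk (fun _ => exists_walk_of_le_card_inter_add hk m) h

lemma card_inter_bounds_of_walk (w : (kneserGraph (2 * k + r) k).Walk X Y) :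
    (∀ j, w.length = 2 * j → k ≤ #(X.1 ∩ Y.1) + j * r) ∧
      (∀ j, w.length = 2 * j + 1 → #(X.1 ∩ Y.1) ≤ j * r) := by
  induction w with
  | @nil X =>
    refine ⟨fun j _ => ?_, fun j hj => by simp at hj⟩
    rw [inter_self, X.2]
    exact Nat.le_add_right k _
  | @cons X Z Y hXZ w ih =>
    have hle := card_inter_add_card_inter_le_of_disjoint Y.1 hXZ.2
    have hge := card_le_card_inter_add_card_inter_add_card_compl X.1 Y.1 Z.1
    rw [card_compl_union, disjoint_iff_inter_eq_empty.mp hXZ.2, card_empty, Y.2] at hge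
    rw [Y.2] at hle
    rw [Walk.length_cons]
    refine ⟨fun j hj => ?_, fun j hj => ?_⟩
    · obtain ⟨i, rfl⟩ : ∃ i, j = i + 1 := ⟨j - 1, by omega⟩
      have := ih.2 i (by omega)
      rw [add_mul, one_mul]
      omega
    · have := ih.1 j (by omega)
      omega

lemma dist_eq_of_card_inter_eq (hr : 1 ≤ r) (hk : 2 * (r * p) < k) (h : #(X.1 ∩ Y.1) = r * p) :
    (kneserGraph (2 * k + r) k).dist X Y = 2 * p + 1 := by
  obtain ⟨w, hw⟩ := exists_walk_of_card_inter_le (by omega) p (X := X) (Y := Y)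
    (by rw [h, mul_comm])
  refine le_antisymm ((dist_le w).trans hw) (not_lt.mp fun hlt => ?_)
  obtain ⟨v, hv⟩ := Reachable.exists_walk_length_eq_dist ⟨w⟩
  obtain ⟨j, hj | hj⟩ := Nat.even_or_odd' v.length
  · have := (card_inter_bounds_of_walk v).1 j hj
    have : j * r ≤ p * r := Nat.mul_le_mul_right r (by omega)
    nlinarith
  · have := (card_inter_bounds_of_walk v).2 j hj
    have : (j + 1) * r ≤ p * r := Nat.mul_le_mul_right r (by omega)
    nlinarith

lemma card_inter_le_of_dist_eq (h : (kneserGraph (2 * k + r) k).dist X Y = 2 * p + 1) :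
    #(X.1 ∩ Y.1) ≤ p * r := by
  obtain ⟨w, hw⟩ := exists_walk_of_dist_ne_zero (h.trans_ne (2 * p).succ_ne_zero)
  exact (card_inter_bounds_of_walk w).2 p (hw.trans h)

variable (X Y) in
lemma edist_le_of_le_two_mul_mul (hk : 0 < k) (hle : k ≤ 2 * (p * r)) :
    (kneserGraph (2 * k + r) k).edist X Y ≤ (2 * p + 1 : ℕ) := by
  by_cases h : #(X.1 ∩ Y.1) ≤ p * r
  · obtain ⟨w, hw⟩ := exists_walk_of_card_inter_le hk p h
    exact w.edist_le.trans (by exact_mod_cast hw)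
  · obtain ⟨w, hw⟩ := exists_walk_of_le_card_inter_add hk p (X := X) (Y := Y) (by omega)
    exact w.edist_le.trans (by exact_mod_cast hw.trans (Nat.le_succ _))

lemma two_mul_mul_lt_of_lt_diam (hd : 2 * p + 1 < (kneserGraph (2 * k + r) k).diam) :
    2 * (r * p) < k := by
  have hk : 0 < k := by
    obtain ⟨X, Y, hXY⟩ := (nontrivial_of_diam_ne_zero (Nat.ne_zero_of_lt hd)).exists_pair_ne
    refine Nat.pos_of_ne_zero fun hk => hXY (Subtype.ext ?_)
    rw [card_eq_zero.mp (X.2.trans hk), card_eq_zero.mp (Y.2.trans hk)]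
  by_contra! hle
  have := ediam_le_of_edist_le
    (edist_le_of_le_two_mul_mul (r := r) · · hk (by rwa [mul_comm p r]))
  exact (ENat.toNat_le_of_le_natCast this).not_gt hd

lemma exactDistanceGraph_adj_of_card_inter_eq (hr : 1 ≤ r) (hk : 2 * (r * p) < k)
    (h : #(X.1 ∩ Y.1) = r * p) :
    (exactDistanceGraph (kneserGraph (2 * k + r) k) (2 * p + 1)).Adj X Y :=
  ⟨ne_of_card_inter_lt (by omega), dist_eq_of_card_inter_eq hr hk h⟩

lemma card_inter_le_of_exactDistanceGraph_adj
    (h : (exactDistanceGraph (kneserGraph (2 * k + r) k) (2 * p + 1)).Adj X Y) :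
    #(X.1 ∩ Y.1) ≤ r * p :=
  mul_comm p r ▸ card_inter_le_of_dist_eq h.2

lemma not_exactDistanceGraph_adj_of_card_inter_le (hk : 0 < k) (hp : 1 ≤ p)
    (h : #(X.1 ∩ Y.1) ≤ r * p - r) :
    ¬(exactDistanceGraph (kneserGraph (2 * k + r) k) (2 * p + 1)).Adj X Y := by
  rintro ⟨-, hd⟩
  obtain ⟨w, hw⟩ := exists_walk_of_card_inter_le hk (p - 1) (X := X) (Y := Y)
    (by rwa [Nat.sub_one_mul, mul_comm p r])
  have := dist_le w
  omega

lemma exactDistanceGraph_dist_eq_two (hr : 1 ≤ r) (hp : 1 ≤ p) (hk : 2 * (r * p) < k)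
    (hs : #(X.1 ∩ Y.1) ≤ r * p - r) (h : k ≤ 2 * (r * p) + r + #(X.1 ∩ Y.1)) :
    (exactDistanceGraph (kneserGraph (2 * k + r) k) (2 * p + 1)).dist X Y = 2 := by
  obtain ⟨C, hXC, hYC⟩ := exists_card_inter_eq X Y (a := r * p) (b := r * p)
    (by omega) (by omega) (by omega) (by omega)
  exact dist_eq_two_of_mem_commonNeighbors (ne_of_card_inter_lt (by omega))
    (not_exactDistanceGraph_adj_of_card_inter_le (by omega) hp hs)
    ⟨exactDistanceGraph_adj_of_card_inter_eq hr hk hXC,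
      exactDistanceGraph_adj_of_card_inter_eq hr hk hYC⟩

lemma exactDistanceGraph_dist_eq_three (hr : 1 ≤ r) (hp : 1 ≤ p) (hk : 2 * (r * p) < k)
    (hs : #(X.1 ∩ Y.1) ≤ r * p - r) (h : 2 * (r * p) + r + #(X.1 ∩ Y.1) < k) :
    (exactDistanceGraph (kneserGraph (2 * k + r) k) (2 * p + 1)).dist X Y = 3 := by
  obtain ⟨C, hXC, hYC⟩ := exists_card_inter_eq X Y (a := r * p) (b := k - r * p)
    (by omega) (by omega) (by omega) (by omega)
  rw [inter_comm] at hYC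
  obtain ⟨D, hCD, hYD⟩ := exists_card_inter_eq C Y (a := r * p) (b := r * p)
    (by omega) (by omega) (by omega) (by omega)
  refine dist_eq_three_of_commonNeighbors_eq_empty (ne_of_card_inter_lt (by omega))
    (not_exactDistanceGraph_adj_of_card_inter_le (by omega) hp hs) ?_
    (.cons (exactDistanceGraph_adj_of_card_inter_eq hr hk hXC)
      (.cons (exactDistanceGraph_adj_of_card_inter_eq hr hk hCD)
        (.cons (exactDistanceGraph_adj_of_card_inter_eq hr hk hYD).symm .nil))) rfl
  refine Set.eq_empty_iff_forall_notMem.mpr fun W hW => ?_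
  rw [mem_commonNeighbors] at hW
  have hXW := card_inter_le_of_exactDistanceGraph_adj hW.1
  have hYW := card_inter_le_of_exactDistanceGraph_adj hW.2
  have hW_card := card_le_card_inter_add_card_inter_add_card_compl X.1 W.1 Y.1
  rw [W.2, card_compl_union] at hW_card
  omega

end kneserGraph

theorem stmt16_general (k r p : ℕ) (hr : 1 ≤ r) (hp : 1 ≤ p)
    (hd : 2 * p + 1 < (kneserGraph (2 * k + r) k).diam)
    (A B : {A : Finset (Fin (2 * k + r)) // A.card = k})
    (hs : (A.1 ∩ B.1).card ≤ r * p - r) :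
    (k - 2 * r * p - r ≤ (A.1 ∩ B.1).card →
      (exactDistanceGraph (kneserGraph (2 * k + r) k) (2 * p + 1)).dist A B = 2) ∧
    ((A.1 ∩ B.1).card < k - 2 * r * p - r →
      (exactDistanceGraph (kneserGraph (2 * k + r) k) (2 * p + 1)).dist A B = 3) := by
  have hk := kneserGraph.two_mul_mul_lt_of_lt_diam hd
  rw [mul_assoc]
  exact ⟨fun h => kneserGraph.exactDistanceGraph_dist_eq_two hr hp hk hs (by omega),
    fun h => kneserGraph.exactDistanceGraph_dist_eq_three hr hp hk hs (by omega)⟩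

theorem stmt16 (k r p : ℕ) (hk : 2 ≤ k) (hr : 1 ≤ r) (hrk : r < k - 1) (hp : 1 ≤ p)
    (hd : 2 * p + 1 < (kneserGraph (2 * k + r) k).diam)
    (A B : {A : Finset (Fin (2 * k + r)) // A.card = k})
    (hs : (A.1 ∩ B.1).card ≤ r * p - r) :
    (k - 2 * r * p - r ≤ (A.1 ∩ B.1).card →
      (exactDistanceGraph (kneserGraph (2 * k + r) k) (2 * p + 1)).dist A B = 2) ∧
    ((A.1 ∩ B.1).card < k - 2 * r * p - r →
      (exactDistanceGraph (kneserGraph (2 * k + r) k) (2 * p + 1)).dist A B = 3) :=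
  stmt16_general k r p hr hp hd A B hs
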